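/- arXiv:1212.6104 — 2 statements merged into one kernel-verified Lean document; each statement's English description precedes it below -/
import Mathlib

section
/- Let k ≥ 1 be a natural number, and let (L, R, E) be a bipartite graph in which L contains every binary string of length k+1 and |R| = 2^k. If (L, R, E) admits online matchings up to size 2^k, then there exists a binary string x of length k+1 whose degree in (L, R, E) is strictly greater than 2^(k−1). -/
/-- The set of neighbors of a set `S` of left vertices in the bipartite graph
with edge relation `E`. -/
def nbhd {α β : Type*} (E : Set (α × β)) (S : Set α) : Set β :=
  {y | ∃ x ∈ S, (x, y) ∈ E}

/-- A bipartite graph with left vertices `L` and edge relation `E` admits online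
matchings up to size `s` if there is a strategy `g`, mapping each finite sequence of
pairwise distinct left vertices to a right vertex, such that for every sequence
`x₁, …, x_m` of pairwise distinct elements of `L` with `m ≤ s`, setting
`y_j = g(x₁, …, x_j)`, every `y_j` is a neighbor of `x_j` and the `y_j` are pairwise
distinct. -/
def AdmitsOnlineMatching {α β : Type*} (L : Set α) (E : Set (α × β)) (s : ℕ) : Prop :=
  ∃ g : List α → β,
    ∀ xs : List α, xs.Nodup → (∀ x ∈ xs, x ∈ L) → xs.length ≤ s →
      (∀ i : Fin xs.length, (xs.get i, g (xs.take (i + 1))) ∈ E) ∧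
      (∀ i j : Fin xs.length, i ≠ j → g (xs.take (i + 1)) ≠ g (xs.take (j + 1)))

/-!
If every string of length `k + 1` had at most `2 ^ (k - 1)` neighbours, then every string would
miss at least half of `R`, so by double counting some `y₀ ∈ R` misses at least `2 ^ k` of the
`2 ^ (k + 1)` strings. Presenting `2 ^ k` of these strings to the online matching strategy forces
it to match them injectively into `R \ {y₀}`, which has only `2 ^ k - 1` elements.
-/

open Finset

theorem Finset.exists_le_card_bipartiteBelow {α β : Type*} (r : α → β → Prop)
    [∀ a b, Decidable (r a b)] {s : Finset α} {t : Finset β} {m n : ℕ} (ht : t.Nonempty)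
    (hm : ∀ a ∈ s, m ≤ #(t.bipartiteAbove r a)) (hmn : #t * n ≤ #s * m) :
    ∃ b ∈ t, n ≤ #(s.bipartiteBelow r b) := by
  by_contra! h
  exact (card_nsmul_lt_card_nsmul_of_le_of_lt r ht hm h).not_ge hmn

lemma ncard_setOf_length_eq (α : Type*) [Fintype α] (n : ℕ) :
    {l : List α | l.length = n}.ncard = Fintype.card α ^ n := by
  rw [← Nat.card_coe_set_eq, ← card_vector, ← Nat.card_eq_fintype_card]
  rfl

section BipartiteGraph

variable {α β : Type*} {L : Set α} {E : Set (α × β)} {s : ℕ}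

@[simp]
lemma mem_nbhd_singleton {x : α} {y : β} : y ∈ nbhd E {x} ↔ (x, y) ∈ E := by
  simp [nbhd]

theorem AdmitsOnlineMatching.card_le_ncard_nbhd (h : AdmitsOnlineMatching L E s)
    {S : Finset α} (hSL : ↑S ⊆ L) (hSs : #S ≤ s) (hfin : (nbhd E S).Finite) :
    #S ≤ (nbhd E S).ncard := by
  obtain ⟨g, hg⟩ := h
  obtain ⟨hadj, hinj⟩ := hg S.toList S.nodup_toList
    (fun x hx => hSL (mem_toList.1 hx)) (by rwa [length_toList])
  calc #S = (Set.univ : Set (Fin S.toList.length)).ncard := by simp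
    _ ≤ (nbhd E S).ncard :=
      Set.ncard_le_ncard_of_injOn (fun i => g (S.toList.take (i + 1)))
        (fun i _ => ⟨_, mem_toList.1 (List.get_mem _ _), hadj i⟩)
        (fun i _ j _ hij => by_contra fun hne => hinj i j hne hij) hfin

theorem AdmitsOnlineMatching.card_lt_ncard (h : AdmitsOnlineMatching L E s) {R : Set β}
    (hR : R.Finite) (hE : ∀ p ∈ E, p.2 ∈ R) {S : Finset α} (hSL : ↑S ⊆ L) (hSs : #S ≤ s)
    {y₀ : β} (hy₀ : y₀ ∈ R) (hSy₀ : ∀ x ∈ S, (x, y₀) ∉ E) : #S < R.ncard := by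
  have hsub : nbhd E S ⊆ R \ {y₀} := by
    rintro y ⟨x, hx, hxy⟩
    exact ⟨hE _ hxy, fun hy => hSy₀ x hx (by rwa [← Set.mem_singleton_iff.1 hy])⟩
  have hfin : (R \ {y₀}).Finite := hR.sdiff
  calc #S ≤ (nbhd E S).ncard := h.card_le_ncard_nbhd hSL hSs (hfin.subset hsub)
    _ ≤ (R \ {y₀}).ncard := Set.ncard_le_ncard hsub hfin
    _ < R.ncard := Set.ncard_sdiff_singleton_lt_of_mem hy₀ hR

lemma ncard_sub_ncard_nbhd_singleton_le [DecidablePred (· ∈ E)] {R : Set β} (hR : R.Finite)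
    (hE : ∀ p ∈ E, p.2 ∈ R) (x : α) :
    R.ncard - (nbhd E {x}).ncard ≤ #(hR.toFinset.bipartiteAbove (fun x y => (x, y) ∉ E) x) := by
  have hnbhd : nbhd E {x} ⊆ R := fun y hy => hE _ (mem_nbhd_singleton.1 hy)
  have hcoe :
      (hR.toFinset.bipartiteAbove (fun x y => (x, y) ∉ E) x : Set β) = R \ nbhd E {x} := by
    ext y; simp
  rw [← Set.ncard_coe_finset, hcoe]
  exact Set.le_ncard_sdiff _ _ (hR.subset hnbhd)

end BipartiteGraph

theorem stmt_12_general {β : Type} (k : ℕ) (hk : 1 ≤ k)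
    (L : Set (List Bool)) (hL : ∀ x : List Bool, x.length = k + 1 → x ∈ L)
    (R : Set β) (hRcard : R.ncard = 2 ^ k)
    (E : Set (List Bool × β)) (hE : ∀ p ∈ E, p.1 ∈ L ∧ p.2 ∈ R)
    (hOM : AdmitsOnlineMatching L E (2 ^ k)) :
    ∃ x : List Bool, x.length = k + 1 ∧ 2 ^ (k - 1) < (nbhd E {x}).ncard := by
  classical
  by_contra! hdeg
  have hRfin : R.Finite := Set.finite_of_ncard_pos (by rw [hRcard]; positivity)
  have hAfin := List.finite_length_eq Bool (k + 1)
  set A := hAfin.toFinset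
  have hAcard : #A = 2 ^ (k + 1) := by
    rw [← Set.ncard_eq_toFinset_card _ hAfin, ncard_setOf_length_eq, Fintype.card_bool]
  have hBcard : #hRfin.toFinset = 2 ^ k := by rw [← Set.ncard_eq_toFinset_card _ hRfin, hRcard]
  have hhalf : 2 ^ k = 2 * 2 ^ (k - 1) := by rw [← pow_succ']; congr; omega
  have hnonadj (x) (hx : x ∈ A) :
      2 ^ (k - 1) ≤ #(hRfin.toFinset.bipartiteAbove (fun x y => (x, y) ∉ E) x) := by
    have hmiss := ncard_sub_ncard_nbhd_singleton_le hRfin (fun p hp => (hE p hp).2) x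
    have hdeg_x := hdeg x (hAfin.mem_toFinset.1 hx)
    omega
  obtain ⟨y₀, hy₀, hy₀A⟩ := exists_le_card_bipartiteBelow _
    (card_pos.1 (by rw [hBcard]; positivity)) hnonadj (n := 2 ^ k)
    (le_of_eq <| by rw [hAcard, hBcard, pow_succ, hhalf]; ring)
  obtain ⟨S, hSA, hScard⟩ := exists_subset_card_eq hy₀A
  have hSL : ↑S ⊆ L := fun x hx =>
    hL x (hAfin.mem_toFinset.1 ((mem_bipartiteBelow _).1 (hSA hx)).1)
  have hlt := hOM.card_lt_ncard hRfin (fun p hp => (hE p hp).2) hSL hScard.le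
    (hRfin.mem_toFinset.1 hy₀) (fun x hx => ((mem_bipartiteBelow _).1 (hSA hx)).2)
  omega

/-- Makhlin's remark: let `k ≥ 1` and `(L, R, E)` be a bipartite graph
with `L` containing every binary string of length `k+1` and `|R| = 2^k`.  If it admits
online matchings up to size `2^k`, then some binary string `x` of length `k+1` has
degree strictly greater than `2^(k-1)`. -/
theorem stmt_12 {β : Type} (k : ℕ) (hk : 1 ≤ k)
    (L : Set (List Bool)) (hL : ∀ x : List Bool, x.length = k + 1 → x ∈ L)
    (R : Set β) (hRfin : R.Finite) (hRcard : R.ncard = 2 ^ k)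
    (E : Set (List Bool × β)) (hE : ∀ p ∈ E, p.1 ∈ L ∧ p.2 ∈ R)
    (hOM : AdmitsOnlineMatching L E (2 ^ k)) :
    ∃ x : List Bool, x.length = k + 1 ∧ 2 ^ (k - 1) < (nbhd E {x}).ncard :=
  stmt_12_general k hk L hL R hRcard E hE hOM
end

section
/- For every real number δ > 0 there exists a polynomial q with natural-number coefficients such that for every natural number k ≥ 0 there exists a bipartite graph (L, R, E) where: L is the set of all binary strings of length at least k; R is a finite set whose cardinality satisfies (|R| : ℝ) < 2^(k+δ); every vertex x ∈ L has degree at most q(|x|), where the polynomial q does not depend on k; and (L, R, E) admits online matchings up to size 2^k. -/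
open Finset

section LayeredGraph

variable {α β : Type*}

def layeredEdges (N : ℕ → α → Finset β) (L : Set α) : Set (α × (ℕ × β)) :=
  {p | p.1 ∈ L ∧ p.2.2 ∈ N p.2.1 p.1}

def levelCells [DecidableEq β] (n : ℕ) (M : ℕ → Finset β) : Finset (ℕ × β) :=
  (range n).biUnion fun i => (M i).image (Prod.mk i)

theorem mem_levelCells [DecidableEq β] {n : ℕ} {M : ℕ → Finset β} {p : ℕ × β} :
    p ∈ levelCells n M ↔ p.1 < n ∧ p.2 ∈ M p.1 := by
  obtain ⟨i, c⟩ := p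
  simp [levelCells]

theorem card_levelCells_le [DecidableEq β] (n : ℕ) (M : ℕ → Finset β) :
    #(levelCells n M) ≤ ∑ i ∈ range n, #(M i) :=
  card_biUnion_le.trans (sum_le_sum fun _ _ => card_image_le)

theorem ncard_nbhd_layeredEdges_le (N : ℕ → α → Finset β) (L : Set α) {n : ℕ}
    (hN : ∀ i, n ≤ i → ∀ x, N i x = ∅) (x : α) :
    (nbhd (layeredEdges N L) {x}).ncard ≤ ∑ i ∈ range n, #(N i x) := by
  classical
  have hsub : nbhd (layeredEdges N L) {x} ⊆ ↑(levelCells n fun i => N i x) := by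
    rintro ⟨i, c⟩ ⟨x', rfl, -, hc⟩
    refine mem_levelCells.2 ⟨?_, hc⟩
    by_contra! hi
    simp [hN i hi] at hc
  calc _ ≤ (↑(levelCells n fun i => N i x) : Set (ℕ × β)).ncard :=
        Set.ncard_le_ncard hsub (finite_toSet _)
    _ ≤ _ := (Set.ncard_coe_finset _).trans_le (card_levelCells_le _ _)

end LayeredGraph

section Greedy

variable {α β : Type*} (N : ℕ → α → Finset β)

def LevelsFull (occ : List (ℕ × β)) (x : α) (i : ℕ) : Prop :=
  ∀ i' < i, ∀ c ∈ N i' x, (i', c) ∈ occ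

variable [Inhabited β]

-- The `default` branch is never taken under the hypotheses of
-- `admitsOnlineMatching_layeredEdges`.
open Classical in
noncomputable def greedyStep (occ : List (ℕ × β)) (x : α) : ℕ × β :=
  if h : ∃ i, ∃ c ∈ N i x, (i, c) ∉ occ then (Nat.find h, (Nat.find_spec h).choose) else default

-- Most recent assignment first.
noncomputable def greedyHistory (l : List α) : List (ℕ × β) :=
  l.foldl (fun occ x => greedyStep N occ x :: occ) []

noncomputable def greedyStrategy (l : List α) : ℕ × β :=
  (greedyHistory N l).headI

open Classical in
noncomputable def reachedBefore (xs : List α) (j : Fin xs.length) (i : ℕ) :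
    Finset (Fin xs.length) :=
  (Iio j).filter fun j' => LevelsFull N (greedyHistory N (xs.take j')) (xs.get j') i

open Classical in
theorem greedyStep_spec {occ : List (ℕ × β)} {x : α} (h : ∃ i, ∃ c ∈ N i x, (i, c) ∉ occ) :
    (greedyStep N occ x).2 ∈ N (greedyStep N occ x).1 x ∧ greedyStep N occ x ∉ occ ∧
      LevelsFull N occ x (greedyStep N occ x).1 := by
  rw [greedyStep, dif_pos h]
  obtain ⟨hmem, hfree⟩ := (Nat.find_spec h).choose_spec
  refine ⟨hmem, hfree, fun i hi c hc => ?_⟩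
  by_contra hc'
  exact Nat.find_min h hi ⟨c, hc, hc'⟩

theorem greedyHistory_concat (l : List α) (x : α) :
    greedyHistory N (l ++ [x]) = greedyStep N (greedyHistory N l) x :: greedyHistory N l := by
  simp [greedyHistory]

variable {N} {xs : List α}

theorem greedyStrategy_take_succ (j : Fin xs.length) :
    greedyStrategy N (xs.take (j + 1)) = greedyStep N (greedyHistory N (xs.take j)) (xs.get j) := by
  rw [greedyStrategy, List.take_add_one, List.getElem?_eq_getElem j.2, Option.toList_some,
    greedyHistory_concat, List.headI_cons, List.get_eq_getElem]

theorem greedyHistory_take_succ (j : Fin xs.length) :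
    greedyHistory N (xs.take (j + 1)) =
      greedyStrategy N (xs.take (j + 1)) :: greedyHistory N (xs.take j) := by
  rw [greedyStrategy_take_succ, List.take_add_one, List.getElem?_eq_getElem j.2,
    Option.toList_some, greedyHistory_concat, List.get_eq_getElem]

theorem mem_greedyHistory_take {p : ℕ × β} {j : ℕ} (hj : j ≤ xs.length) :
    p ∈ greedyHistory N (xs.take j) ↔
      ∃ j' : Fin xs.length, j' < j ∧ greedyStrategy N (xs.take (j' + 1)) = p := by
  induction j with
  | zero => simp [greedyHistory]
  | succ j ih =>
    rw [greedyHistory_take_succ ⟨j, hj⟩, List.mem_cons, ih (by omega)]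
    constructor
    · rintro (rfl | ⟨j', hj', rfl⟩)
      exacts [⟨⟨j, hj⟩, by simp, rfl⟩, ⟨j', by omega, rfl⟩]
    · rintro ⟨j', hj', rfl⟩
      rcases Nat.lt_succ_iff_lt_or_eq.mp hj' with hlt | heq
      · exact Or.inr ⟨j', hlt, rfl⟩
      · subst heq
        exact Or.inl rfl

theorem mem_greedyHistory_take_of_levelsFull {j j' : Fin xs.length} (hjj' : j' ≤ j) {x : α}
    {i : ℕ} (hfull : LevelsFull N (greedyHistory N (xs.take j')) x (i + 1)) {c : β}
    (hc : c ∈ N i x) : (i, c) ∈ greedyHistory N (xs.take j) := by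
  obtain ⟨j'', hj'', hp⟩ := (mem_greedyHistory_take j'.2.le).1 (hfull i i.lt_succ_self c hc)
  exact (mem_greedyHistory_take j.2.le).2 ⟨j'', by omega, hp⟩

theorem reachedBefore_succ_subset (j : Fin xs.length) (i : ℕ) :
    reachedBefore N xs j (i + 1) ⊆ reachedBefore N xs j i := by
  intro j' hj'
  simp only [reachedBefore, mem_filter] at hj' ⊢
  exact ⟨hj'.1, fun i' hi' => hj'.2 i' (by omega)⟩

theorem card_le_card_reachedBefore_sdiff {j : Fin xs.length}
    (hprev : ∀ j' < j, ∃ i, ∃ c ∈ N i (xs.get j'), (i, c) ∉ greedyHistory N (xs.take j'))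
    {i : ℕ} {U : Finset β} (hU : ∀ c ∈ U, (i, c) ∈ greedyHistory N (xs.take j)) :
    #U ≤ #(reachedBefore N xs j i \ reachedBefore N xs j (i + 1)) := by
  classical
  refine (card_le_card fun c hc => ?_).trans (card_image_le (f := fun j' : Fin xs.length =>
    (greedyStrategy N (xs.take (j' + 1))).2))
  obtain ⟨j', hj', hp⟩ := (mem_greedyHistory_take j.2.le).1 (hU c hc)
  have hj'j : j' < j := hj'
  have hspec := greedyStep_spec N (hprev j' hj'j)
  rw [← greedyStrategy_take_succ, hp] at hspec
  refine mem_image.2 ⟨j', ?_, by rw [hp]⟩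
  simp only [reachedBefore, mem_sdiff, mem_filter, mem_Iio, hj'j, true_and]
  exact ⟨hspec.2.2, fun hfull => hspec.2.1 (hfull _ (Nat.lt_succ_self _) _ hspec.1)⟩

variable [DecidableEq β] {L : Set α} {τ : ℕ → ℕ} {I : ℕ}

theorem card_reachedBefore_lt (hnd : xs.Nodup) (hL : ∀ x ∈ xs, x ∈ L) (hlen : xs.length ≤ τ 0)
    (hexp : ∀ i < I, ∀ S : Finset α, ↑S ⊆ L → #S = τ (i + 1) →
      τ i - τ (i + 1) ≤ #(S.biUnion (N i)))
    (j : Fin xs.length)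
    (hprev : ∀ j' < j, ∃ i, ∃ c ∈ N i (xs.get j'), (i, c) ∉ greedyHistory N (xs.take j')) :
    ∀ i ≤ I, LevelsFull N (greedyHistory N (xs.take j)) (xs.get j) i →
      #(reachedBefore N xs j i) < τ i := by
  classical
  intro i hi hreach
  induction i with
  | zero =>
    have hA0 : reachedBefore N xs j 0 = Iio j :=
      filter_true_of_mem fun j' _ i' hi' => absurd hi' (Nat.not_lt_zero _)
    rw [hA0, Fin.card_Iio]
    omega
  | succ i ih =>
    have hAi := ih (by omega) fun i' hi' => hreach i' (by omega)
    by_contra! hge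
    -- `τ (i + 1)` requests found all their level-`i` neighbours occupied, but fewer than
    -- `τ i - τ (i + 1)` requests were served at level `i`.
    obtain ⟨T, hTA, hTcard⟩ := exists_subset_card_eq hge
    have hinj : Function.Injective xs.get := List.nodup_iff_injective_get.1 hnd
    have hScard : #(T.image xs.get) = τ (i + 1) := by rw [card_image_of_injective _ hinj, hTcard]
    have hSL : ↑(T.image xs.get) ⊆ L := by
      intro x hx
      obtain ⟨j', -, rfl⟩ := mem_image.1 hx
      exact hL _ (List.get_mem xs j')
    have hcover := card_le_card_reachedBefore_sdiff hprev (U := (T.image xs.get).biUnion (N i))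
      (i := i) fun c hc => by
        obtain ⟨x, hx, hcx⟩ := mem_biUnion.1 hc
        obtain ⟨j', hj', rfl⟩ := mem_image.1 hx
        have hj'A := mem_filter.1 (hTA hj')
        exact mem_greedyHistory_take_of_levelsFull (mem_Iio.1 hj'A.1).le hj'A.2 hcx
    have hexpand := hexp i (by omega) _ hSL hScard
    rw [card_sdiff_of_subset (reachedBefore_succ_subset j i)] at hcover
    have hmono := card_le_card (reachedBefore_succ_subset (N := N) j i)
    omega

theorem exists_notMem_greedyHistory_take (hnd : xs.Nodup) (hL : ∀ x ∈ xs, x ∈ L)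
    (hlen : xs.length ≤ τ 0)
    (hexp : ∀ i < I, ∀ S : Finset α, ↑S ⊆ L → #S = τ (i + 1) →
      τ i - τ (i + 1) ≤ #(S.biUnion (N i)))
    (hlast : ∀ x ∈ L, τ I ≤ #(N I x)) (j : Fin xs.length) :
    ∃ i, ∃ c ∈ N i (xs.get j), (i, c) ∉ greedyHistory N (xs.take j) := by
  induction j using WellFoundedLT.induction with
  | _ j ih =>
  by_contra! hfull
  have hlt := card_reachedBefore_lt hnd hL hlen hexp j ih I le_rfl fun i _ => hfull i
  have hcover := card_le_card_reachedBefore_sdiff ih (U := N I (xs.get j)) (hfull I)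
  have hroom := hlast _ (hL _ (List.get_mem xs j))
  have hsdiff := card_le_card (sdiff_subset (s := reachedBefore N xs j I)
    (t := reachedBefore N xs j (I + 1)))
  omega

theorem admitsOnlineMatching_layeredEdges {s : ℕ} (hs : s ≤ τ 0)
    (hexp : ∀ i < I, ∀ S : Finset α, ↑S ⊆ L → #S = τ (i + 1) →
      τ i - τ (i + 1) ≤ #(S.biUnion (N i)))
    (hlast : ∀ x ∈ L, τ I ≤ #(N I x)) :
    AdmitsOnlineMatching L (layeredEdges N L) s := by
  refine ⟨greedyStrategy N, fun xs hnd hL hlen => ?_⟩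
  have hspec (j : Fin xs.length) := greedyStrategy_take_succ (N := N) j ▸
    greedyStep_spec N (exists_notMem_greedyHistory_take hnd hL (hlen.trans hs) hexp hlast j)
  refine ⟨fun j => ⟨hL _ (List.get_mem xs j), (hspec j).1⟩, fun j j' hne => ?_⟩
  wlog hlt : j' < j generalizing j j'
  · exact (this j' j hne.symm (lt_of_le_of_ne (not_lt.1 hlt) hne)).symm
  exact fun heq => (hspec j).2.1 ((mem_greedyHistory_take j.2.le).2 ⟨j', hlt, heq.symm⟩)

end Greedy

theorem sum_powersetCard_prod_le_pow {α : Type*} (T : Finset α) {a : α → ℝ} (ha : ∀ x, 0 ≤ a x)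
    (σ : ℕ) : ∑ S ∈ T.powersetCard σ, ∏ x ∈ S, a x ≤ (∑ x ∈ T, a x) ^ σ := by
  classical
  induction T using Finset.induction_on generalizing σ with
  | empty =>
    rcases σ with _ | σ
    · simp
    · simp [powersetCard_eq_empty.2 (show #(∅ : Finset α) < σ + 1 by simp)]
  | insert y T hy ih =>
    cases σ with
    | zero => simp
    | succ σ =>
      have hnotmem : ∀ S ∈ T.powersetCard σ, y ∉ S := fun S hS h =>
        hy ((mem_powersetCard.1 hS).1 h)
      have hdisj : Disjoint (T.powersetCard (σ + 1)) ((T.powersetCard σ).image (insert y)) :=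
        disjoint_left.2 fun S h1 h2 => by
          obtain ⟨S', -, rfl⟩ := mem_image.1 h2
          exact hy ((mem_powersetCard.1 h1).1 (mem_insert_self y S'))
      have hinj : Set.InjOn (insert y) (T.powersetCard σ : Set (Finset α)) :=
        fun S₁ h₁ S₂ h₂ h => by
          rw [← erase_insert (hnotmem S₁ h₁), ← erase_insert (hnotmem S₂ h₂), h]
      have hs : 0 ≤ ∑ x ∈ T, a x := sum_nonneg fun x _ => ha x
      rw [powersetCard_succ_insert hy, sum_union hdisj, sum_image hinj, sum_insert hy,
        sum_congr rfl fun S hS => prod_insert (hnotmem S hS), ← mul_sum]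
      calc _ ≤ (∑ x ∈ T, a x) ^ (σ + 1) + a y * (∑ x ∈ T, a x) ^ σ :=
            add_le_add (ih _) (mul_le_mul_of_nonneg_left (ih σ) (ha y))
        _ = (a y + ∑ x ∈ T, a x) * (∑ x ∈ T, a x) ^ σ := by ring
        _ ≤ (a y + ∑ x ∈ T, a x) * (a y + ∑ x ∈ T, a x) ^ σ :=
            mul_le_mul_of_nonneg_left (pow_le_pow_left₀ hs (le_add_of_nonneg_left (ha y)) σ)
              (add_nonneg (ha y) hs)
        _ = _ := by ring

section Expander

variable {α : Type*} [DecidableEq α] (T : Finset α) (d : α → ℕ) {m : ℕ}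

-- A point of `(x : T) → Fin (d x) → Fin m` chooses `d x` neighbours in `Fin m` for each `x ∈ T`.
def avoidingChoices (S : Finset α) (W : Finset (Fin m)) : Finset ((x : T) → Fin (d x) → Fin m) :=
  Fintype.piFinset fun x => if ↑x ∈ S then Fintype.piFinset fun _ => Wᶜ else univ

theorem card_avoidingChoices {w : ℕ} (hm : 0 < m) (hw : w ≤ m) {S : Finset α} (hST : S ⊆ T)
    {W : Finset (Fin m)} (hW : #W = w) :
    (#(avoidingChoices T d S W) : ℝ) =
      Fintype.card ((x : T) → Fin (d x) → Fin m) * ∏ x ∈ S, (1 - (w : ℝ) / m) ^ d x := by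
  have hmR : (0 : ℝ) < m := by exact_mod_cast hm
  have hfactor (x : T) : ((#(if ↑x ∈ S then Fintype.piFinset fun _ : Fin (d x) => Wᶜ
      else univ) : ℕ) : ℝ) = (m : ℝ) ^ d x * if ↑x ∈ S then (1 - (w : ℝ) / m) ^ d x else 1 := by
    split_ifs
    · rw [Fintype.card_piFinset, prod_const, card_univ, Fintype.card_fin, card_compl,
        Fintype.card_fin, hW, ← mul_pow, mul_sub, mul_div_cancel₀ _ hmR.ne', mul_one]
      push_cast [hw]
      rfl
    · simp
  have hcard : (Fintype.card ((x : T) → Fin (d x) → Fin m) : ℝ) = ∏ x : T, (m : ℝ) ^ d x := by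
    simp
  rw [avoidingChoices, Fintype.card_piFinset, Nat.cast_prod, prod_congr rfl fun x _ => hfactor x,
    prod_mul_distrib, hcard, prod_coe_sort T fun x => if x ∈ S then _ ^ d x else 1, prod_ite_mem,
    inter_eq_right.2 hST]

theorem card_biUnion_avoidingChoices_lt {w σ : ℕ} (hm : 0 < m) (hw : w ≤ m)
    (h : (2 : ℝ) ^ m * (∑ x ∈ T, (1 - (w : ℝ) / m) ^ d x) ^ σ < 1) :
    #((T.powersetCard σ).biUnion fun S =>
        ((univ : Finset (Fin m)).powersetCard w).biUnion (avoidingChoices T d S)) <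
      Fintype.card ((x : T) → Fin (d x) → Fin m) := by
  set ρ : ℝ := 1 - (w : ℝ) / m
  set K := Fintype.card ((x : T) → Fin (d x) → Fin m)
  have hρ : 0 ≤ ρ := sub_nonneg.2 ((div_le_one (by exact_mod_cast hm)).2 (by exact_mod_cast hw))
  have hK : (0 : ℝ) < K := by
    exact_mod_cast Fintype.card_pos_iff.2 ⟨(fun _ _ => ⟨0, hm⟩ : (x : T) → Fin (d x) → Fin m)⟩
  have hchoose : ((m.choose w : ℕ) : ℝ) ≤ 2 ^ m := by exact_mod_cast Nat.choose_le_two_pow m w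
  have hsum := sum_powersetCard_prod_le_pow T (fun x => pow_nonneg hρ (d x)) σ
  rw [← Nat.cast_lt (α := ℝ)]
  calc _ ≤ ∑ S ∈ T.powersetCard σ, ∑ W ∈ univ.powersetCard w, (#(avoidingChoices T d S W) : ℝ) := by
        exact_mod_cast card_biUnion_le.trans (sum_le_sum fun _ _ => card_biUnion_le)
    _ = ∑ S ∈ T.powersetCard σ, (m.choose w : ℝ) * (K * ∏ x ∈ S, ρ ^ d x) := by
        refine sum_congr rfl fun S hS => ?_
        rw [sum_congr rfl fun W hW => card_avoidingChoices T d hm hw (mem_powersetCard.1 hS).1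
          (mem_powersetCard.1 hW).2, sum_const, card_powersetCard, card_univ, Fintype.card_fin,
          nsmul_eq_mul]
    _ ≤ ∑ S ∈ T.powersetCard σ, 2 ^ m * (K * ∏ x ∈ S, ρ ^ d x) :=
        sum_le_sum fun S _ => mul_le_mul_of_nonneg_right hchoose
          (mul_nonneg hK.le (prod_nonneg fun x _ => pow_nonneg hρ _))
    _ = K * (2 ^ m * ∑ S ∈ T.powersetCard σ, ∏ x ∈ S, ρ ^ d x) := by
        rw [mul_sum, mul_sum]
        exact sum_congr rfl fun S _ => by ring
    _ < K * 1 := by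
        gcongr
        exact (mul_le_mul_of_nonneg_left hsum (by positivity)).trans_lt h
    _ = K := mul_one _

end Expander

theorem exists_expander {α : Type*} (T : Finset α) (d : α → ℕ) {m w σ : ℕ} (hm : 0 < m)
    (hw : w ≤ m) (h : (2 : ℝ) ^ m * (∑ x ∈ T, (1 - (w : ℝ) / m) ^ d x) ^ σ < 1) :
    ∃ N : α → Finset (Fin m), (∀ x, #(N x) ≤ d x) ∧
      ∀ S ⊆ T, #S = σ → m - w < #(S.biUnion N) := by
  classical
  obtain ⟨ω, -, hω⟩ := exists_mem_notMem_of_card_lt_card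
    (card_biUnion_avoidingChoices_lt T d hm hw h)
  set N : α → Finset (Fin m) := fun x => if hx : x ∈ T then univ.image (ω ⟨x, hx⟩) else ∅
  refine ⟨N, fun x => ?_, fun S hST hS => ?_⟩
  · by_cases hx : x ∈ T
    · simpa [N, hx] using card_image_le (s := univ) (f := ω ⟨x, hx⟩)
    · simp [N, hx]
  · by_contra! hsmall
    obtain ⟨W, hW, hWcard⟩ := exists_subset_card_eq (s := (S.biUnion N)ᶜ) (n := w)
      (by rw [card_compl, Fintype.card_fin]; omega)
    refine hω (mem_biUnion.2 ⟨S, mem_powersetCard.2 ⟨hST, hS⟩,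
      mem_biUnion.2 ⟨W, mem_powersetCard.2 ⟨subset_univ _, hWcard⟩, ?_⟩⟩)
    refine Fintype.mem_piFinset.2 fun x => ?_
    split_ifs with hx
    · refine Fintype.mem_piFinset.2 fun s => mem_compl.2 fun hsW => mem_compl.1 (hW hsW) ?_
      exact mem_biUnion.2 ⟨x, hx, by simp [N, x.2]⟩
    · exact mem_univ _

def shortStrings (B : ℕ) : Finset (List Bool) :=
  (range B).biUnion fun n =>
    (univ : Finset (List.Vector Bool n)).map ⟨List.Vector.toList, List.Vector.toList_injective⟩

theorem mem_shortStrings {B : ℕ} {x : List Bool} : x ∈ shortStrings B ↔ x.length < B := by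
  simp only [shortStrings, mem_biUnion, mem_range, mem_map, mem_univ, true_and,
    Function.Embedding.coeFn_mk]
  constructor
  · rintro ⟨n, hn, v, rfl⟩
    rwa [List.Vector.toList_length]
  · exact fun h => ⟨_, h, ⟨x, rfl⟩, rfl⟩

theorem sum_shortStrings {M : Type*} [AddCommMonoid M] (B : ℕ) (f : ℕ → M) :
    ∑ x ∈ shortStrings B, f x.length = ∑ n ∈ range B, 2 ^ n • f n := by
  rw [shortStrings, sum_biUnion]
  · refine sum_congr rfl fun n _ => ?_
    simp [List.Vector.toList_length, card_vector]
  · intro n _ n' _ hne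
    refine disjoint_left.2 fun x hx hx' => hne ?_
    obtain ⟨v, -, rfl⟩ := mem_map.1 hx
    obtain ⟨v', -, hv⟩ := mem_map.1 hx'
    simpa using congrArg List.length hv.symm

theorem one_sub_two_div_pow_le {u : ℕ} (hu : 2 ≤ u) : (1 - 2 / (u : ℝ)) ^ u ≤ 1 / 4 := by
  calc (1 - 2 / (u : ℝ)) ^ u ≤ Real.exp (-2) :=
        Real.one_sub_div_pow_le_exp_neg (by exact_mod_cast hu)
    _ = Real.exp (-1) ^ 2 := by rw [← Real.exp_nat_mul]; norm_num
    _ ≤ (1 / 2) ^ 2 := by gcongr; exact Real.exp_neg_one_lt_half.le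
    _ = 1 / 4 := by norm_num

theorem sum_shortStrings_pow_le (B : ℕ) {u : ℕ} (hu : 2 ≤ u) :
    ∑ x ∈ shortStrings B, (1 - 2 / (u : ℝ)) ^ (u * (x.length + u)) ≤ 2 * (1 / 4) ^ u := by
  rw [sum_shortStrings B fun n => (1 - 2 / (u : ℝ)) ^ (u * (n + u))]
  have hρ0 : 0 ≤ 1 - 2 / (u : ℝ) :=
    sub_nonneg.2 ((div_le_one (by positivity)).2 (by exact_mod_cast hu))
  calc ∑ n ∈ range B, 2 ^ n • (1 - 2 / (u : ℝ)) ^ (u * (n + u))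
      ≤ ∑ n ∈ range B, (1 / 4) ^ u * (1 / 2) ^ n := by
        refine sum_le_sum fun n _ => ?_
        rw [nsmul_eq_mul, Nat.cast_pow, Nat.cast_ofNat, pow_mul]
        calc (2 : ℝ) ^ n * ((1 - 2 / (u : ℝ)) ^ u) ^ (n + u)
            ≤ 2 ^ n * (1 / 4) ^ (n + u) := by gcongr; exact one_sub_two_div_pow_le hu
          _ = (1 / 4) ^ u * (1 / 2) ^ n := by
            rw [pow_add, ← mul_assoc, ← mul_pow]; norm_num [mul_comm]
    _ = (1 / 4) ^ u * ∑ n ∈ range B, (1 / 2 : ℝ) ^ n := by rw [mul_sum]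
    _ ≤ (1 / 4) ^ u * 2 := by gcongr; exact sum_geometric_two_le B
    _ = 2 * (1 / 4) ^ u := mul_comm _ _

theorem exists_shortStrings_expander (B : ℕ) {u σ : ℕ} (hu : 2 ≤ u) (hσ : 1 ≤ σ) :
    ∃ N : List Bool → Finset (Fin (σ * u)), (∀ x, #(N x) ≤ u * (x.length + u)) ∧
      ∀ S ⊆ shortStrings B, #S = σ → σ * u - 2 * σ < #(S.biUnion N) := by
  refine exists_expander (shortStrings B) (fun x => u * (x.length + u)) (by positivity)
    (by nlinarith) ?_
  have hρ : 1 - ((2 * σ : ℕ) : ℝ) / ((σ * u : ℕ) : ℝ) = 1 - 2 / u := by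
    have : (σ : ℝ) ≠ 0 := by positivity
    push_cast
    field_simp
  rw [hρ]
  calc (2 : ℝ) ^ (σ * u) * (∑ x ∈ shortStrings B, (1 - 2 / (u : ℝ)) ^ (u * (x.length + u))) ^ σ
      ≤ (2 : ℝ) ^ (σ * u) * (2 * (1 / 4) ^ u) ^ σ := by
        gcongr
        · exact sum_nonneg fun x _ =>
            pow_nonneg (sub_nonneg.2 ((div_le_one (by positivity)).2 (by exact_mod_cast hu))) _
        · exact sum_shortStrings_pow_le B hu
    _ = (2 * (1 / 2) ^ u) ^ σ := by
        rw [mul_comm σ u, pow_mul, ← mul_pow, ← mul_assoc, mul_comm _ (2 : ℝ), mul_assoc,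
          ← mul_pow]
        norm_num
    _ ≤ (1 / 2) ^ σ := by
        gcongr
        calc 2 * (1 / 2 : ℝ) ^ u ≤ 2 * (1 / 2) ^ 2 := mul_le_mul_of_nonneg_left
              (pow_le_pow_of_le_one (by norm_num) (by norm_num) hu) zero_le_two
          _ = 1 / 2 := by norm_num
    _ < 1 := pow_lt_one₀ (by norm_num) (by norm_num) (by omega)

theorem exists_listBool_expander (B : ℕ) {u σ : ℕ} (hu : 2 ≤ u) (hσ : 1 ≤ σ) :
    ∃ N : List Bool → Finset ℕ, (∀ x, N x ⊆ range (σ * u)) ∧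
      (∀ x, x.length < B → #(N x) ≤ u * (x.length + u)) ∧
      ∀ S : Finset (List Bool), #S = σ → σ * u - 2 * σ < #(S.biUnion N) := by
  classical
  obtain ⟨N, hdeg, hexp⟩ := exists_shortStrings_expander B hu hσ
  refine ⟨fun x => if x ∈ shortStrings B then (N x).image Fin.val else range (σ * u),
    fun x => ?_, fun x hx => ?_, fun S hS => ?_⟩
  · dsimp only
    split_ifs
    · exact image_subset_iff.2 fun c _ => mem_range.2 c.2
    · exact subset_rfl
  · dsimp only
    rw [if_pos (mem_shortStrings.2 hx), card_image_of_injective _ Fin.val_injective]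
    exact hdeg x
  · by_cases hST : S ⊆ shortStrings B
    · rw [biUnion_congr rfl fun x hx => if_pos (hST hx), ← biUnion_image,
        card_image_of_injective _ Fin.val_injective]
      exact hexp S hST hS
    · obtain ⟨x, hxS, hx⟩ := not_subset.1 hST
      have hfull := subset_biUnion_of_mem
        (fun x => if x ∈ shortStrings B then (N x).image Fin.val else range (σ * u)) hxS
      rw [if_neg hx] at hfull
      refine lt_of_lt_of_le ?_ (card_le_card hfull)
      rw [card_range]
      have : 0 < σ * u := Nat.mul_pos (by omega) (by omega)
      omega

open Filter Topology in
theorem exists_two_div_two_pow_sub_one_lt {ε : ℝ} (hε : 0 < ε) :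
    ∃ t : ℕ, 1 ≤ t ∧ 2 / ((2 : ℝ) ^ t - 1) < ε := by
  have hlim : Tendsto (fun t : ℕ => 2 / ((2 : ℝ) ^ t - 1)) atTop (𝓝 0) := by
    refine tendsto_const_nhds.div_atTop ?_
    simpa only [sub_eq_add_neg] using tendsto_atTop_add_const_right _ (-1 : ℝ)
      (tendsto_pow_atTop_atTop_of_one_lt one_lt_two)
  exact ((eventually_ge_atTop 1).and (hlim.eventually (gt_mem_nhds hε))).exists

theorem sum_geometric_levels_le {τ : ℕ → ℝ} {r : ℝ} (hr : 1 < r) {I : ℕ}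
    (hτ : ∀ i < I, τ i = τ (i + 1) * r) (hI : 0 ≤ τ I) :
    ∑ i ∈ range I, τ (i + 1) * (r + 1) + τ I ≤ τ 0 * (1 + 2 / (r - 1)) := by
  set G := ∑ i ∈ range I, τ (i + 1)
  have htel : (r - 1) * G = τ 0 - τ I := by
    rw [← sum_range_sub', mul_sum]
    exact sum_congr rfl fun i hi => by rw [hτ i (mem_range.1 hi)]; ring
  have hG : G ≤ τ 0 / (r - 1) := by
    rw [le_div_iff₀ (sub_pos.2 hr)]
    linarith
  calc ∑ i ∈ range I, τ (i + 1) * (r + 1) + τ I = (r - 1) * G + τ I + 2 * G := by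
        rw [← sum_mul]; ring
    _ ≤ τ 0 + 2 * (τ 0 / (r - 1)) := by linarith
    _ = τ 0 * (1 + 2 / (r - 1)) := by ring

section Levels

variable (t k : ℕ)

def levelThreshold (i : ℕ) : ℕ :=
  2 ^ (k - i * t)

def levelSize (i : ℕ) : ℕ :=
  if i < k / t then levelThreshold t k (i + 1) * (2 ^ t + 1) else levelThreshold t k i

variable {t k}

theorem levelThreshold_succ_mul {i : ℕ} (hi : i < k / t) :
    levelThreshold t k (i + 1) * 2 ^ t = levelThreshold t k i := by
  have : (i + 1) * t ≤ k := (Nat.mul_le_mul_right t hi).trans (Nat.div_mul_le_self k t)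
  rw [levelThreshold, levelThreshold, ← pow_add]
  congr 1
  rw [add_mul] at this ⊢
  omega

theorem levelThreshold_div_lt (ht : 0 < t) : levelThreshold t k (k / t) < 2 ^ t := by
  have : k < k / t * t + t := Nat.lt_div_mul_add ht
  exact Nat.pow_lt_pow_right one_lt_two (by omega)

theorem sum_levelSize_le (ht : 1 ≤ t) :
    (∑ i ∈ range (k / t + 1), levelSize t k i : ℝ) ≤ 2 ^ k * (1 + 2 / (2 ^ t - 1)) := by
  have hsum : ∑ i ∈ range (k / t + 1), (levelSize t k i : ℝ) =
      ∑ i ∈ range (k / t), (levelThreshold t k (i + 1) : ℝ) * (2 ^ t + 1) +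
        levelThreshold t k (k / t) := by
    rw [sum_range_succ, levelSize, if_neg (lt_irrefl _)]
    refine congrArg (· + _) (sum_congr rfl fun i hi => ?_)
    rw [levelSize, if_pos (mem_range.1 hi)]
    push_cast
    rfl
  rw [hsum]
  simpa [levelThreshold] using sum_geometric_levels_le (τ := fun i => (levelThreshold t k i : ℝ))
    (one_lt_pow₀ one_lt_two (by omega)) (fun i hi => by
      exact_mod_cast (levelThreshold_succ_mul hi).symm) (Nat.cast_nonneg _)

end Levels

theorem sum_range_succ_le_mul {a : ℕ → ℕ} {I n d B : ℕ} (hIn : I ≤ n) (hd : 1 ≤ d)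
    (hshort : n < B → ∀ i < I + 1, a i ≤ d) (hlong : ∑ i ∈ range (I + 1), a i ≤ B) :
    ∑ i ∈ range (I + 1), a i ≤ (n + 1) * d := by
  by_cases hnB : n < B
  · calc ∑ i ∈ range (I + 1), a i ≤ ∑ i ∈ range (I + 1), d :=
          sum_le_sum fun i hi => hshort hnB i (mem_range.1 hi)
      _ = (I + 1) * d := by rw [sum_const, card_range, smul_eq_mul]
      _ ≤ (n + 1) * d := Nat.mul_le_mul_right d (by omega)
  · calc ∑ i ∈ range (I + 1), a i ≤ n + 1 := by omega
      _ ≤ (n + 1) * d := Nat.le_mul_of_pos_right _ hd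

theorem exists_levels {t : ℕ} (k : ℕ) (ht : 1 ≤ t) (B : ℕ) :
    ∃ N : ℕ → List Bool → Finset ℕ, (∀ i x, N i x ⊆ range (levelSize t k i)) ∧
      (∀ i, k / t < i → ∀ x, N i x = ∅) ∧
      (∀ i x, x.length < B → #(N i x) ≤ (2 ^ t + 1) * (x.length + (2 ^ t + 1))) ∧
      (∀ i < k / t, ∀ S : Finset (List Bool), #S = levelThreshold t k (i + 1) →
        levelThreshold t k i - levelThreshold t k (i + 1) ≤ #(S.biUnion (N i))) ∧
      ∀ x, levelThreshold t k (k / t) ≤ #(N (k / t) x) := by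
  set u := 2 ^ t + 1 with hu
  set I := k / t
  set τ := levelThreshold t k
  choose Nexp hNexp_sub hNexp_deg hNexp_exp using fun i =>
    exists_listBool_expander B (u := u) (σ := τ (i + 1)) (Nat.succ_le_succ Nat.one_le_two_pow)
      Nat.one_le_two_pow
  refine ⟨fun i x => if i < I then Nexp i x else if i = I then range (τ I) else ∅,
    fun i x => ?_, fun i hi x => ?_, fun i x hx => ?_, fun i hi S hS => ?_, fun x => ?_⟩
  · simp only [levelSize]
    split_ifs with hiI hiI'
    · exact hNexp_sub i x
    · rw [hiI']
    · exact empty_subset _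
  · dsimp only
    rw [if_neg (by omega), if_neg (by omega)]
  · dsimp only
    split_ifs
    · exact hNexp_deg i x hx
    · rw [card_range]
      calc τ I ≤ u := (levelThreshold_div_lt (by omega)).le.trans (Nat.le_succ _)
        _ ≤ u * (x.length + u) := Nat.le_mul_of_pos_right u (by positivity)
    · simp
  · dsimp only
    rw [biUnion_congr rfl fun x _ => if_pos hi]
    have hexp := hNexp_exp i S hS
    have h1 : τ (i + 1) * 2 ^ t = τ i := levelThreshold_succ_mul hi
    have h2 : τ (i + 1) * u = τ (i + 1) * 2 ^ t + τ (i + 1) := by rw [hu, mul_add, mul_one]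
    omega
  · simp

theorem exists_layered_graph (t k : ℕ) (ht : 1 ≤ t) :
    ∃ (R : Finset (ℕ × ℕ)) (N : ℕ → List Bool → Finset ℕ),
      (#R : ℝ) ≤ 2 ^ k * (1 + 2 / (2 ^ t - 1)) ∧
      (∀ i x c, c ∈ N i x → (i, c) ∈ R) ∧
      (∀ x : List Bool, k ≤ x.length → (nbhd (layeredEdges N {x | k ≤ x.length}) {x}).ncard ≤
        (x.length + 1) * ((2 ^ t + 1) * (x.length + (2 ^ t + 1)))) ∧
      AdmitsOnlineMatching {x : List Bool | k ≤ x.length}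
        (layeredEdges N {x | k ≤ x.length}) (2 ^ k) := by
  -- a string of length at least `B` is joined to every cell, so its degree is at most its length
  set B := ∑ i ∈ range (k / t + 1), levelSize t k i
  obtain ⟨N, hNsub, hN_empty, hdeg, hexp, hlast⟩ := exists_levels k ht B
  refine ⟨levelCells (k / t + 1) fun i => range (levelSize t k i), N, ?_, fun i x c hc => ?_,
    fun x hx => ?_, ?_⟩
  · refine le_trans ?_ (sum_levelSize_le ht)
    exact_mod_cast (card_levelCells_le _ _).trans_eq (sum_congr rfl fun i _ => card_range _)
  · refine mem_levelCells.2 ⟨?_, hNsub i x hc⟩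
    by_contra! hi
    simp [hN_empty i hi] at hc
  · exact (ncard_nbhd_layeredEdges_le N _ hN_empty x).trans (sum_range_succ_le_mul
      ((Nat.div_le_self k t).trans hx) (Nat.one_le_iff_ne_zero.2 (by positivity))
      (fun hxB i _ => hdeg i x hxB)
      (sum_le_sum fun i _ => (card_le_card (hNsub i x)).trans_eq (card_range _)))
  · exact admitsOnlineMatching_layeredEdges (by simp [levelThreshold])
      (fun i hi S _ hS => hexp i hi S hS) fun x _ => hlast x

/-- second part of Makhlin's remark: for every real `δ > 0` there is a
polynomial `q` with natural coefficients such that for every `k ≥ 0` there is a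
bipartite graph `(L, R, E)` where `L` is the set of binary strings of length at least
`k`, `|R| < 2^(k+δ)` (as real numbers), every `x ∈ L` has degree at most `q(|x|)`
(with `q` independent of `k`), and the graph admits online matchings up to size
`2^k`. -/
theorem stmt_13 (δ : ℝ) (hδ : 0 < δ) :
    ∃ q : Polynomial ℕ, ∀ k : ℕ,
      ∃ (β : Type) (R : Set β) (E : Set (List Bool × β)),
        R.Finite ∧ (R.ncard : ℝ) < (2 : ℝ) ^ ((k : ℝ) + δ) ∧
        (∀ p ∈ E, k ≤ p.1.length ∧ p.2 ∈ R) ∧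
        (∀ x : List Bool, k ≤ x.length → (nbhd E {x}).ncard ≤ q.eval x.length) ∧
        AdmitsOnlineMatching {x : List Bool | k ≤ x.length} E (2 ^ k) := by
  obtain ⟨t, ht, htδ⟩ :=
    exists_two_div_two_pow_sub_one_lt (sub_pos.2 (Real.one_lt_rpow one_lt_two hδ))
  refine ⟨(.X + 1) * (.C (2 ^ t + 1) * (.X + .C (2 ^ t + 1))), fun k => ?_⟩
  obtain ⟨R, N, hR, hRN, hdeg, hmatch⟩ := exists_layered_graph t k ht
  refine ⟨ℕ × ℕ, R, layeredEdges N {x | k ≤ x.length}, R.finite_toSet, ?_,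
    fun p hp => ⟨hp.1, hRN _ _ _ hp.2⟩, fun x hx => by simpa using hdeg x hx, hmatch⟩
  rw [Set.ncard_coe_finset, Real.rpow_add two_pos, Real.rpow_natCast]
  calc (#R : ℝ) ≤ 2 ^ k * (1 + 2 / (2 ^ t - 1)) := hR
    _ < 2 ^ k * 2 ^ δ := by gcongr; linarith
end
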